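/- Let α, α₁, α₂ ∈ ℝ with α ≠ 0 and α·α₂ < 0. For i, j ∈ ℕ and t ∈ ℝ define μ_{i,j}(t) = ∫₀^∞ ∫₀^∞ x^i y^j e^{(i+j)αt} · ((y − x)/(x + y)) · exp((α₁/α)(x + y) e^{αt} + (α₂/(2α))(x² + y²) e^{2αt}) dx dy and β_i(t) = ∫₀^∞ x^i e^{iαt} exp((α₁/α) x e^{αt} + (α₂/(2α)) x² e^{2αt}) dx. Then all integrals converge, all functions are differentiable on ℝ, and for all i, j ∈ ℕ and t ∈ ℝ: μ_{i,j}'(t) = α(i+j) μ_{i,j}(t) + α₁(μ_{i+1,j}(t) + μ_{i,j+1}(t)) + α₂(μ_{i+2,j}(t) + μ_{i,j+2}(t)), β_i'(t) = iα β_i(t) + α₁ β_{i+1}(t) + α₂ β_{i+2}(t), μ_{i,j}'(t) = −2α μ_{i,j}(t), and β_i'(t) = −α β_i(t). -/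

import Mathlib

/-!
Substituting `p ↦ e^{αt} p` gives `μ_{i,j}(t) = e^{-2αt} μ_{i,j}(0)` and
`β_i(t) = e^{-αt} β_i(0)`, which are the stationarity relations. Since every moment carries the
same factor, the nonisospectral evolutions reduce to identities between the moments at `t = 0`.
These are virial identities: differentiating `s ↦ ∫ f (s • p) dp = s^{-d} ∫ f` at `s = 1` under
the integral sign (dominated by Gaussian moments) gives `∫ p • ∇f = -d ∫ f`. For the density
`f = x^i y^j (y - x)/(x + y) exp (a (x + y) + b (x² + y²))`, with `a = α₁/α` and `b = α₂/(2α)`,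
the factor `(y - x)/(x + y)` is homogeneous of degree `0`, so
`p • ∇f = (i + j + a (x + y) + 2 b (x² + y²)) f`.
-/

open MeasureTheory

/-- The deformed skew-symmetric bimoments of partial-skew orthogonal polynomials:
`μ_{i,j}(t) = ∬_{(0,∞)²} x^i y^j e^{(i+j)αt} ((y−x)/(x+y))
  exp((α₁/α)(x+y)e^{αt} + (α₂/(2α))(x²+y²)e^{2αt}) dx dy`. -/
noncomputable def skewBimoment (α α₁ α₂ : ℝ) (i j : ℕ) (t : ℝ) : ℝ :=
  ∫ p in (Set.Ioi (0 : ℝ)) ×ˢ (Set.Ioi (0 : ℝ)),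
    p.1 ^ i * p.2 ^ j * Real.exp (((i : ℝ) + (j : ℝ)) * α * t)
      * ((p.2 - p.1) / (p.1 + p.2))
      * Real.exp (α₁ / α * (p.1 + p.2) * Real.exp (α * t)
          + α₂ / (2 * α) * (p.1 ^ 2 + p.2 ^ 2) * Real.exp (2 * α * t))

/-- The deformed single moments:
`β_i(t) = ∫₀^∞ x^i e^{iαt} exp((α₁/α) x e^{αt} + (α₂/(2α)) x² e^{2αt}) dx`. -/
noncomputable def skewSingleMoment (α α₁ α₂ : ℝ) (i : ℕ) (t : ℝ) : ℝ :=
  ∫ x in Set.Ioi (0 : ℝ),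
    x ^ i * Real.exp ((i : ℝ) * α * t) *
      Real.exp (α₁ / α * x * Real.exp (α * t) + α₂ / (2 * α) * x ^ 2 * Real.exp (2 * α * t))

open Set Real

noncomputable section

def gaussDensity (a b : ℝ) (i : ℕ) (x : ℝ) : ℝ :=
  x ^ i * exp (a * x + b * x ^ 2)

def skewGaussDensity (a b : ℝ) (i j : ℕ) (p : ℝ × ℝ) : ℝ :=
  p.1 ^ i * p.2 ^ j * ((p.2 - p.1) / (p.1 + p.2))
    * exp (a * (p.1 + p.2) + b * (p.1 ^ 2 + p.2 ^ 2))

def gaussMoment (a b : ℝ) (i : ℕ) : ℝ :=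
  ∫ x in Ioi 0, gaussDensity a b i x

def skewGaussBimoment (a b : ℝ) (i j : ℕ) : ℝ :=
  ∫ p in Ioi (0 : ℝ) ×ˢ Ioi (0 : ℝ), skewGaussDensity a b i j p

end

theorem integrableOn_gaussDensity (a : ℝ) {b : ℝ} (hb : b < 0) (i : ℕ) :
    IntegrableOn (gaussDensity a b i) (Ioi 0) := by
  have hgauss : IntegrableOn (fun x : ℝ => x ^ (i : ℝ) * exp (-(-(b / 2)) * x ^ 2)) (Ioi 0) :=
    integrableOn_rpow_mul_exp_neg_mul_sq (by linarith) (by linarith [i.cast_nonneg (α := ℝ)])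
  refine (hgauss.const_mul (exp (a ^ 2 / (-2 * b)))).mono' (by unfold gaussDensity; fun_prop) ?_
  filter_upwards [ae_restrict_mem measurableSet_Ioi] with x (hx : 0 < x)
  -- completing the square: `a x + b x² ≤ a² / (-2b) + (b/2) x²`
  have hsq : a * x + b * x ^ 2 ≤ a ^ 2 / (-2 * b) + -(-(b / 2)) * x ^ 2 := by
    have h : a ^ 2 / (-2 * b) * (-2 * b) = a ^ 2 := div_mul_cancel₀ _ (by linarith)
    nlinarith [sq_nonneg (b * x + a)]
  have hx0 : 0 ≤ x := hx.le
  rw [gaussDensity, rpow_natCast, norm_of_nonneg (by positivity), mul_left_comm, ← exp_add]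
  gcongr

theorem abs_sub_div_add_le_one {x y : ℝ} (hx : 0 < x) (hy : 0 < y) :
    |(y - x) / (x + y)| ≤ 1 := by
  have hxy : 0 < x + y := by linarith
  rw [abs_div, abs_of_pos hxy, div_le_one hxy]
  exact abs_le.mpr ⟨by linarith, by linarith⟩

theorem integrableOn_skewGaussDensity (a : ℝ) {b : ℝ} (hb : b < 0) (i j : ℕ) :
    IntegrableOn (skewGaussDensity a b i j) (Ioi (0 : ℝ) ×ˢ Ioi (0 : ℝ)) := by
  have hprod : IntegrableOn (fun p : ℝ × ℝ => gaussDensity a b i p.1 * gaussDensity a b j p.2)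
      (Ioi (0 : ℝ) ×ˢ Ioi (0 : ℝ)) := by
    rw [IntegrableOn, Measure.volume_eq_prod, ← Measure.prod_restrict]
    exact (integrableOn_gaussDensity a hb i).mul_prod (integrableOn_gaussDensity a hb j)
  refine hprod.mono' (by unfold skewGaussDensity; fun_prop) ?_
  filter_upwards [ae_restrict_mem (measurableSet_Ioi.prod measurableSet_Ioi)]
    with p ⟨hx, hy⟩
  have hexp : exp (a * (p.1 + p.2) + b * (p.1 ^ 2 + p.2 ^ 2))
      = exp (a * p.1 + b * p.1 ^ 2) * exp (a * p.2 + b * p.2 ^ 2) := by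
    rw [← exp_add]; ring_nf
  have hr := abs_sub_div_add_le_one (mem_Ioi.mp hx) (mem_Ioi.mp hy)
  have hx0 : (0 : ℝ) ≤ p.1 := le_of_lt hx
  have hy0 : (0 : ℝ) ≤ p.2 := le_of_lt hy
  rw [skewGaussDensity, gaussDensity, gaussDensity, norm_eq_abs, abs_mul, abs_mul,
    abs_of_nonneg (by positivity : 0 ≤ p.1 ^ i * p.2 ^ j), abs_of_pos (exp_pos _), hexp]
  calc p.1 ^ i * p.2 ^ j * |(p.2 - p.1) / (p.1 + p.2)|
        * (exp (a * p.1 + b * p.1 ^ 2) * exp (a * p.2 + b * p.2 ^ 2))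
      ≤ p.1 ^ i * p.2 ^ j * 1 * (exp (a * p.1 + b * p.1 ^ 2) * exp (a * p.2 + b * p.2 ^ 2)) := by
        gcongr
    _ = _ := by ring

theorem integral_gaussDensity_comp_mul (a b : ℝ) (i : ℕ) {s : ℝ} (hs : 0 < s) :
    ∫ x in Ioi 0, gaussDensity a b i (s * x) = s⁻¹ * gaussMoment a b i := by
  rw [integral_comp_mul_left_Ioi _ _ hs, mul_zero, smul_eq_mul, gaussMoment]

theorem integral_skewGaussDensity_comp_smul (a b : ℝ) (i j : ℕ) {s : ℝ} (hs : 0 < s) :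
    ∫ p in Ioi (0 : ℝ) ×ˢ Ioi (0 : ℝ), skewGaussDensity a b i j (s • p)
      = (s ^ 2)⁻¹ * skewGaussBimoment a b i j := by
  rw [Measure.setIntegral_comp_smul_of_pos _ _ _ hs, smul_set_prod,
    LinearOrderedField.smul_Ioi hs, mul_zero, Module.finrank_prod, Module.finrank_self,
    smul_eq_mul, skewGaussBimoment]

theorem exp_natCast_mul_mul (n : ℕ) (c t : ℝ) : exp (n * c * t) = exp (c * t) ^ n := by
  rw [← exp_nat_mul, mul_assoc]

theorem skewSingleMoment_eq (α α₁ α₂ : ℝ) (i : ℕ) (t : ℝ) :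
    skewSingleMoment α α₁ α₂ i t = exp (-α * t) * gaussMoment (α₁ / α) (α₂ / (2 * α)) i := by
  have hpoint : ∀ x, x ^ i * exp (i * α * t)
        * exp (α₁ / α * x * exp (α * t) + α₂ / (2 * α) * x ^ 2 * exp (2 * α * t))
      = gaussDensity (α₁ / α) (α₂ / (2 * α)) i (exp (α * t) * x) := fun x => by
    rw [gaussDensity, exp_natCast_mul_mul, ← Nat.cast_ofNat, exp_natCast_mul_mul]
    ring_nf
  simp_rw [skewSingleMoment, hpoint]
  rw [integral_gaussDensity_comp_mul _ _ _ (exp_pos _), ← exp_neg, neg_mul]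

theorem skewBimoment_eq (α α₁ α₂ : ℝ) (i j : ℕ) (t : ℝ) :
    skewBimoment α α₁ α₂ i j t
      = exp (-2 * α * t) * skewGaussBimoment (α₁ / α) (α₂ / (2 * α)) i j := by
  have hc : exp (α * t) ≠ 0 := (exp_pos _).ne'
  have hpoint : ∀ p : ℝ × ℝ,
      p.1 ^ i * p.2 ^ j * exp ((i + j) * α * t) * ((p.2 - p.1) / (p.1 + p.2))
        * exp (α₁ / α * (p.1 + p.2) * exp (α * t)
          + α₂ / (2 * α) * (p.1 ^ 2 + p.2 ^ 2) * exp (2 * α * t))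
      = skewGaussDensity (α₁ / α) (α₂ / (2 * α)) i j (exp (α * t) • p) := fun p => by
    rw [skewGaussDensity, Prod.smul_fst, Prod.smul_snd, smul_eq_mul, smul_eq_mul,
      ← mul_sub, ← mul_add, mul_div_mul_left _ _ hc, ← Nat.cast_add, exp_natCast_mul_mul,
      ← Nat.cast_ofNat, exp_natCast_mul_mul]
    ring_nf
  simp_rw [skewBimoment, hpoint]
  rw [integral_skewGaussDensity_comp_smul _ _ _ _ (exp_pos _), ← exp_nat_mul, ← exp_neg]
  ring_nf

theorem hasDerivAt_pow_mul_mul_exp (k : ℕ) (a b w l q s : ℝ) :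
    HasDerivAt (fun s => s ^ k * (w * exp (a * s * l + b * s ^ 2 * q)))
      (k * s ^ (k - 1) * (w * exp (a * s * l + b * s ^ 2 * q))
        + a * s ^ k * (l * (w * exp (a * s * l + b * s ^ 2 * q)))
        + 2 * b * s ^ (k + 1) * (q * (w * exp (a * s * l + b * s ^ 2 * q)))) s := by
  have hexponent :
      HasDerivAt (fun s => a * s * l + b * s ^ 2 * q) (a * l + b * (2 * s) * q) s := by
    refine ((((hasDerivAt_id s).const_mul a).mul_const l).add
      (((hasDerivAt_pow 2 s).const_mul b).mul_const q)).congr_deriv ?_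
    norm_num
  refine ((hasDerivAt_pow k s).mul (hexponent.exp.const_mul w)).congr_deriv ?_
  ring

theorem exp_dilation_le {a b l q s : ℝ} (hb : b < 0) (hl : 0 ≤ l) (hq : 0 ≤ q)
    (hs₁ : 1 / 2 ≤ s) (hs₂ : s ≤ 2) :
    exp (a * s * l + b * s ^ 2 * q) ≤ exp (2 * |a| * l + b / 4 * q) := by
  have hlin : a * s * l ≤ 2 * |a| * l := by
    nlinarith [mul_nonneg (mul_nonneg (sub_nonneg.mpr (le_abs_self a)) (by linarith : 0 ≤ s)) hl,
      mul_nonneg (mul_nonneg (abs_nonneg a) (by linarith : 0 ≤ 2 - s)) hl]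
  have hquad : b * s ^ 2 * q ≤ b / 4 * q := by
    nlinarith [mul_nonneg (mul_nonneg (neg_nonneg.mpr hb.le) hq)
      (by nlinarith : 0 ≤ s ^ 2 - 1 / 4)]
  gcongr

theorem hasDerivAt_integral_pow_mul_exp_dilation {X : Type*} [MeasurableSpace X] {ν : Measure X}
    {w L Q : X → ℝ} (hL : ∀ᵐ p ∂ν, 0 ≤ L p) (hQ : ∀ᵐ p ∂ν, 0 ≤ Q p) (k : ℕ) (a : ℝ) {b : ℝ}
    (hb : b < 0)
    (h₀ : ∀ A, ∀ B < 0, Integrable (fun p => w p * exp (A * L p + B * Q p)) ν)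
    (h₁ : ∀ A, ∀ B < 0, Integrable (fun p => L p * (w p * exp (A * L p + B * Q p))) ν)
    (h₂ : ∀ A, ∀ B < 0, Integrable (fun p => Q p * (w p * exp (A * L p + B * Q p))) ν) :
    HasDerivAt (fun s => ∫ p, s ^ k * (w p * exp (a * s * L p + b * s ^ 2 * Q p)) ∂ν)
      (k * ∫ p, w p * exp (a * L p + b * Q p) ∂ν
        + a * ∫ p, L p * (w p * exp (a * L p + b * Q p)) ∂ν
        + 2 * b * ∫ p, Q p * (w p * exp (a * L p + b * Q p)) ∂ν) 1 := by
  have hU : Ioo (1 / 2 : ℝ) 2 ∈ nhds 1 := Ioo_mem_nhds (by norm_num) (by norm_num)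
  have hU₁ : (1 : ℝ) ∈ Ioo (1 / 2 : ℝ) 2 := ⟨by norm_num, by norm_num⟩
  have hb_sq : ∀ s ∈ Ioo (1 / 2 : ℝ) 2, b * s ^ 2 < 0 := fun s hs =>
    mul_neg_of_neg_of_pos hb (pow_pos (by linarith [hs.1]) 2)
  have hpow : ∀ s ∈ Ioo (1 / 2 : ℝ) 2, ∀ n ≤ k + 1, s ^ n ≤ 2 ^ (k + 1) := fun s hs n hn => by
    calc s ^ n ≤ 2 ^ n := pow_le_pow_left₀ (by linarith [hs.1]) hs.2.le n
      _ ≤ 2 ^ (k + 1) := pow_le_pow_right₀ one_le_two hn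
  have hmain := hasDerivAt_integral_of_dominated_loc_of_deriv_le (μ := ν)
    (F := fun s p => s ^ k * (w p * exp (a * s * L p + b * s ^ 2 * Q p)))
    (bound := fun p => k * 2 ^ (k + 1) * ‖w p * exp (2 * |a| * L p + b / 4 * Q p)‖
      + |a| * 2 ^ (k + 1) * ‖L p * (w p * exp (2 * |a| * L p + b / 4 * Q p))‖
      + 2 * |b| * 2 ^ (k + 1) * ‖Q p * (w p * exp (2 * |a| * L p + b / 4 * Q p))‖)
    hU (Filter.eventually_of_mem hU fun s hs =>
      ((h₀ _ _ (hb_sq s hs)).const_mul _).aestronglyMeasurable)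
    ((h₀ _ _ (hb_sq 1 hU₁)).const_mul _)
    ((((h₀ _ _ (hb_sq 1 hU₁)).const_mul _).add
      ((h₁ _ _ (hb_sq 1 hU₁)).const_mul _)).add
      ((h₂ _ _ (hb_sq 1 hU₁)).const_mul _)).aestronglyMeasurable
    ?_ ((((h₀ _ _ (by linarith)).norm.const_mul _).add
      ((h₁ _ _ (by linarith)).norm.const_mul _)).add ((h₂ _ _ (by linarith)).norm.const_mul _))
    (ae_of_all _ fun p s _ => hasDerivAt_pow_mul_mul_exp k a b (w p) (L p) (Q p) s)
  · have hi₀ := (h₀ a b hb).const_mul (k : ℝ)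
    have hi₁ := (h₁ a b hb).const_mul a
    have hi₂ := (h₂ a b hb).const_mul (2 * b)
    simp only [one_pow, mul_one] at hmain
    rw [integral_add (hi₀.fun_add hi₁) hi₂, integral_add hi₀ hi₁, integral_const_mul,
      integral_const_mul, integral_const_mul] at hmain
    exact hmain.2
  · filter_upwards [hL, hQ] with p hl hq s hs
    have hexp := exp_dilation_le (a := a) hb hl hq hs.1.le hs.2.le
    have hs0 : 0 ≤ s := by linarith [hs.1]
    refine (norm_add₃_le ..).trans ?_
    simp only [norm_mul, norm_pow, norm_of_nonneg (exp_pos _).le, norm_of_nonneg hs0,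
      norm_eq_abs, Nat.abs_cast, abs_two]
    gcongr
    all_goals first | exact hpow s hs _ (by omega) | exact hs.2.le

theorem integral_virial {X : Type*} [MeasurableSpace X] {ν : Measure X}
    {w L Q : X → ℝ} (hL : ∀ᵐ p ∂ν, 0 ≤ L p) (hQ : ∀ᵐ p ∂ν, 0 ≤ Q p) (k d : ℕ) (a : ℝ) {b : ℝ}
    (hb : b < 0)
    (h₀ : ∀ A, ∀ B < 0, Integrable (fun p => w p * exp (A * L p + B * Q p)) ν)
    (h₁ : ∀ A, ∀ B < 0, Integrable (fun p => L p * (w p * exp (A * L p + B * Q p))) ν)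
    (h₂ : ∀ A, ∀ B < 0, Integrable (fun p => Q p * (w p * exp (A * L p + B * Q p))) ν)
    (hscale : ∀ s > 0, ∫ p, s ^ k * (w p * exp (a * s * L p + b * s ^ 2 * Q p)) ∂ν
      = (s ^ d)⁻¹ * ∫ p, w p * exp (a * L p + b * Q p) ∂ν) :
    k * ∫ p, w p * exp (a * L p + b * Q p) ∂ν
        + a * ∫ p, L p * (w p * exp (a * L p + b * Q p)) ∂ν
        + 2 * b * ∫ p, Q p * (w p * exp (a * L p + b * Q p)) ∂ν
      = -d * ∫ p, w p * exp (a * L p + b * Q p) ∂ν := by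
  have hpow : HasDerivAt (fun s : ℝ => (s ^ d)⁻¹ * ∫ p, w p * exp (a * L p + b * Q p) ∂ν)
      (-d * ∫ p, w p * exp (a * L p + b * Q p) ∂ν) 1 := by
    refine (((hasDerivAt_pow d 1).inv (by norm_num)).mul_const _).congr_deriv ?_
    simp
  refine (hasDerivAt_integral_pow_mul_exp_dilation hL hQ k a hb h₀ h₁ h₂).unique
    (hpow.congr_of_eventuallyEq ?_)
  filter_upwards [Ioi_mem_nhds one_pos] with s hs using hscale s hs

theorem gaussMoment_virial (a : ℝ) {b : ℝ} (hb : b < 0) (i : ℕ) :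
    i * gaussMoment a b i + a * gaussMoment a b (i + 1) + 2 * b * gaussMoment a b (i + 2)
      = -gaussMoment a b i := by
  have hsplit₁ : ∀ A B x, x * gaussDensity A B i x = gaussDensity A B (i + 1) x :=
    fun A B x => by simp only [gaussDensity]; ring
  have hsplit₂ : ∀ A B x, x ^ 2 * gaussDensity A B i x = gaussDensity A B (i + 2) x :=
    fun A B x => by simp only [gaussDensity]; ring
  have hvirial := integral_virial (ν := volume.restrict (Ioi 0)) (w := fun x => x ^ i)
    (L := fun x => x) (Q := fun x => x ^ 2)
    (ae_restrict_of_forall_mem measurableSet_Ioi fun x hx => le_of_lt hx)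
    (ae_of_all _ fun x => sq_nonneg x) i 1 a hb
    (fun A B hB => integrableOn_gaussDensity A hB i)
    (fun A B hB => (integrableOn_gaussDensity A hB (i + 1)).congr
      (ae_of_all _ fun x => (hsplit₁ A B x).symm))
    (fun A B hB => (integrableOn_gaussDensity A hB (i + 2)).congr
      (ae_of_all _ fun x => (hsplit₂ A B x).symm))
    (fun s hs => by
      rw [pow_one,
        show ∫ x in Ioi 0, x ^ i * exp (a * x + b * x ^ 2) = gaussMoment a b i from rfl,
        ← integral_gaussDensity_comp_mul a b i hs]
      refine integral_congr_ae (ae_of_all _ fun x => ?_)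
      dsimp only
      rw [gaussDensity, mul_pow]
      ring_nf)
  have hfold : ∀ x, x ^ i * exp (a * x + b * x ^ 2) = gaussDensity a b i x := fun _ => rfl
  simp only [hfold, hsplit₁, hsplit₂, Nat.cast_one, neg_one_mul] at hvirial
  exact hvirial

theorem skewGaussBimoment_virial (a : ℝ) {b : ℝ} (hb : b < 0) (i j : ℕ) :
    (i + j) * skewGaussBimoment a b i j
        + a * (skewGaussBimoment a b (i + 1) j + skewGaussBimoment a b i (j + 1))
        + 2 * b * (skewGaussBimoment a b (i + 2) j + skewGaussBimoment a b i (j + 2))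
      = -2 * skewGaussBimoment a b i j := by
  set S := Ioi (0 : ℝ) ×ˢ Ioi (0 : ℝ)
  have hS : ∀ᵐ p ∂volume.restrict S, 0 < p.1 ∧ 0 < p.2 :=
    ae_restrict_of_forall_mem (measurableSet_Ioi.prod measurableSet_Ioi) fun p hp => hp
  have hsplit₁ : ∀ A B (p : ℝ × ℝ), (p.1 + p.2) * skewGaussDensity A B i j p
      = skewGaussDensity A B (i + 1) j p + skewGaussDensity A B i (j + 1) p :=
    fun A B p => by simp only [skewGaussDensity]; ring
  have hsplit₂ : ∀ A B (p : ℝ × ℝ), (p.1 ^ 2 + p.2 ^ 2) * skewGaussDensity A B i j p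
      = skewGaussDensity A B (i + 2) j p + skewGaussDensity A B i (j + 2) p :=
    fun A B p => by simp only [skewGaussDensity]; ring
  have hvirial := integral_virial (ν := volume.restrict S)
    (w := fun p => p.1 ^ i * p.2 ^ j * ((p.2 - p.1) / (p.1 + p.2)))
    (L := fun p => p.1 + p.2) (Q := fun p => p.1 ^ 2 + p.2 ^ 2)
    (hS.mono fun p hp => by linarith [hp.1, hp.2]) (ae_of_all _ fun p => by positivity)
    (i + j) 2 a hb (fun A B hB => integrableOn_skewGaussDensity A hB i j)
    (fun A B hB => ((integrableOn_skewGaussDensity A hB (i + 1) j).add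
      (integrableOn_skewGaussDensity A hB i (j + 1))).congr
        (ae_of_all _ fun p => (hsplit₁ A B p).symm))
    (fun A B hB => ((integrableOn_skewGaussDensity A hB (i + 2) j).add
      (integrableOn_skewGaussDensity A hB i (j + 2))).congr
        (ae_of_all _ fun p => (hsplit₂ A B p).symm))
    (fun s hs => by
      rw [show (∫ p in S, p.1 ^ i * p.2 ^ j * ((p.2 - p.1) / (p.1 + p.2))
          * exp (a * (p.1 + p.2) + b * (p.1 ^ 2 + p.2 ^ 2))) = skewGaussBimoment a b i j from rfl,
        ← integral_skewGaussDensity_comp_smul a b i j hs]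
      refine integral_congr_ae (ae_of_all _ fun p => ?_)
      dsimp only
      rw [skewGaussDensity, Prod.smul_fst, Prod.smul_snd, smul_eq_mul, smul_eq_mul, ← mul_sub,
        ← mul_add, mul_div_mul_left _ _ hs.ne']
      ring_nf)
  have hfold : ∀ p : ℝ × ℝ, p.1 ^ i * p.2 ^ j * ((p.2 - p.1) / (p.1 + p.2))
      * exp (a * (p.1 + p.2) + b * (p.1 ^ 2 + p.2 ^ 2)) = skewGaussDensity a b i j p :=
    fun _ => rfl
  simp only [hfold, hsplit₁, hsplit₂] at hvirial
  have hint := integrableOn_skewGaussDensity a hb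
  rw [integral_add (hint _ _) (hint _ _), integral_add (hint _ _) (hint _ _)] at hvirial
  push_cast at hvirial
  exact hvirial

theorem hasDerivAt_exp_mul_mul (κ C t : ℝ) :
    HasDerivAt (fun u => exp (κ * u) * C) (κ * (exp (κ * t) * C)) t :=
  (((hasDerivAt_id t).const_mul κ).exp.mul_const C).congr_deriv (by simp; ring)

theorem hasDerivAt_skewSingleMoment (α α₁ α₂ : ℝ) (i : ℕ) (t : ℝ) :
    HasDerivAt (fun u => skewSingleMoment α α₁ α₂ i u)
      (-α * skewSingleMoment α α₁ α₂ i t) t := by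
  simp_rw [skewSingleMoment_eq]
  exact hasDerivAt_exp_mul_mul _ _ t

theorem hasDerivAt_skewBimoment (α α₁ α₂ : ℝ) (i j : ℕ) (t : ℝ) :
    HasDerivAt (fun u => skewBimoment α α₁ α₂ i j u)
      (-2 * α * skewBimoment α α₁ α₂ i j t) t := by
  simp_rw [skewBimoment_eq]
  exact hasDerivAt_exp_mul_mul _ _ t

theorem skewSingleMoment_evolution_eq {α α₁ α₂ : ℝ} (hα : α ≠ 0) (hb : α₂ / (2 * α) < 0)
    (i : ℕ) (t : ℝ) :
    i * α * skewSingleMoment α α₁ α₂ i t + α₁ * skewSingleMoment α α₁ α₂ (i + 1) t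
        + α₂ * skewSingleMoment α α₁ α₂ (i + 2) t
      = -α * skewSingleMoment α α₁ α₂ i t := by
  simp only [skewSingleMoment_eq]
  linear_combination (norm := skip) (α * exp (-α * t)) * gaussMoment_virial (α₁ / α) hb i
  field_simp
  ring

theorem skewBimoment_evolution_eq {α α₁ α₂ : ℝ} (hα : α ≠ 0) (hb : α₂ / (2 * α) < 0)
    (i j : ℕ) (t : ℝ) :
    α * (i + j) * skewBimoment α α₁ α₂ i j t
        + α₁ * (skewBimoment α α₁ α₂ (i + 1) j t + skewBimoment α α₁ α₂ i (j + 1) t)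
        + α₂ * (skewBimoment α α₁ α₂ (i + 2) j t + skewBimoment α α₁ α₂ i (j + 2) t)
      = -2 * α * skewBimoment α α₁ α₂ i j t := by
  simp only [skewBimoment_eq]
  linear_combination (norm := skip)
    (α * exp (-2 * α * t)) * skewGaussBimoment_virial (α₁ / α) hb i j
  field_simp
  ring

/-- The deformed skew-symmetric (bi)moments converge, are differentiable, and simultaneously
satisfy the nonisospectral evolutions and the stationarity relations. -/
theorem skewMoments_evolution (α α₁ α₂ : ℝ) (hα : α ≠ 0) (hαα₂ : α * α₂ < 0) :
    (∀ (i j : ℕ) (t : ℝ), IntegrableOn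
      (fun p : ℝ × ℝ =>
        p.1 ^ i * p.2 ^ j * Real.exp (((i : ℝ) + (j : ℝ)) * α * t)
          * ((p.2 - p.1) / (p.1 + p.2))
          * Real.exp (α₁ / α * (p.1 + p.2) * Real.exp (α * t)
              + α₂ / (2 * α) * (p.1 ^ 2 + p.2 ^ 2) * Real.exp (2 * α * t)))
      ((Set.Ioi (0 : ℝ)) ×ˢ (Set.Ioi (0 : ℝ)))) ∧
    (∀ (i : ℕ) (t : ℝ), IntegrableOn
      (fun x : ℝ => x ^ i * Real.exp ((i : ℝ) * α * t) *
        Real.exp (α₁ / α * x * Real.exp (α * t)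
          + α₂ / (2 * α) * x ^ 2 * Real.exp (2 * α * t)))
      (Set.Ioi (0 : ℝ))) ∧
    (∀ (i j : ℕ) (t : ℝ), HasDerivAt (fun u => skewBimoment α α₁ α₂ i j u)
      (α * ((i : ℝ) + (j : ℝ)) * skewBimoment α α₁ α₂ i j t
        + α₁ * (skewBimoment α α₁ α₂ (i + 1) j t + skewBimoment α α₁ α₂ i (j + 1) t)
        + α₂ * (skewBimoment α α₁ α₂ (i + 2) j t + skewBimoment α α₁ α₂ i (j + 2) t)) t) ∧
    (∀ (i : ℕ) (t : ℝ), HasDerivAt (fun u => skewSingleMoment α α₁ α₂ i u)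
      ((i : ℝ) * α * skewSingleMoment α α₁ α₂ i t
        + α₁ * skewSingleMoment α α₁ α₂ (i + 1) t
        + α₂ * skewSingleMoment α α₁ α₂ (i + 2) t) t) ∧
    (∀ (i j : ℕ) (t : ℝ), HasDerivAt (fun u => skewBimoment α α₁ α₂ i j u)
      (-2 * α * skewBimoment α α₁ α₂ i j t) t) ∧
    (∀ (i : ℕ) (t : ℝ), HasDerivAt (fun u => skewSingleMoment α α₁ α₂ i u)
      (-α * skewSingleMoment α α₁ α₂ i t) t) := by
  have hb : α₂ / (2 * α) < 0 := by
    rw [show α₂ / (2 * α) = α * α₂ / (2 * α ^ 2) by field_simp]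
    exact div_neg_of_neg_of_pos hαα₂ (by positivity)
  have hb' : ∀ t, α₂ / (2 * α) * exp (2 * α * t) < 0 :=
    fun t => mul_neg_of_neg_of_pos hb (exp_pos _)
  refine ⟨fun i j t => ?_, fun i t => ?_,
    fun i j t => (hasDerivAt_skewBimoment α α₁ α₂ i j t).congr_deriv
      (skewBimoment_evolution_eq hα hb i j t).symm,
    fun i t => (hasDerivAt_skewSingleMoment α α₁ α₂ i t).congr_deriv
      (skewSingleMoment_evolution_eq hα hb i t).symm,
    hasDerivAt_skewBimoment α α₁ α₂, hasDerivAt_skewSingleMoment α α₁ α₂⟩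
  · refine IntegrableOn.congr_fun
      ((integrableOn_skewGaussDensity (α₁ / α * exp (α * t)) (hb' t) i j).const_mul
        (exp ((i + j) * α * t))) (fun p _ => ?_) (measurableSet_Ioi.prod measurableSet_Ioi)
    simp only [skewGaussDensity]
    ring_nf
  · refine IntegrableOn.congr_fun
      ((integrableOn_gaussDensity (α₁ / α * exp (α * t)) (hb' t) i).const_mul
        (exp (i * α * t))) (fun x _ => ?_) measurableSet_Ioi
    simp only [gaussDensity]
    ring_nf
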